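/- arXiv:1112.6010 — 2 statements merged into one kernel-verified Lean document; each statement's English description precedes it below -/
import Mathlib

section
/- Let ε > 0 and define F(t,k) = log(1+1/(t+⋯+t^k))/log t for t>1. Define x_k(ε) by F(x_k,k)=ε, x = x₁, and let K be the largest integer with x_K ≥ 2 (assume ε < log(3/2)/log 2 so K ≥ 1). Then K < 1 + (2/log 2)·log x. -/
open Real Filter

noncomputable def G (n : ℕ) : ℝ := (∑ d ∈ n.divisors, (d : ℝ)) / (n * Real.log (Real.log n))

def sigma' (n : ℕ) : ℕ := ∑ d ∈ n.divisors, d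

def IsGA1 (N : ℕ) : Prop :=
  1 < N ∧ ¬ N.Prime ∧ ∀ p : ℕ, p.Prime → p ∣ N → G (N / p) ≤ G N

def IsGA2 (N : ℕ) : Prop :=
  1 < N ∧ ∀ a : ℕ, 0 < a → G (a * N) ≤ G N

def IsCA (N : ℕ) (ε : ℝ) : Prop :=
  0 < N ∧ ∀ n : ℕ, 1 < n → (sigma' n : ℝ) / (n : ℝ) ^ (1 + ε) ≤ (sigma' N : ℝ) / (N : ℝ) ^ (1 + ε)

noncomputable def F (t : ℝ) (k : ℕ) : ℝ :=
  Real.log (1 + 1 / (∑ i ∈ Finset.Icc 1 k, t ^ i)) / Real.log t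

noncomputable def chebTheta (n : ℕ) : ℝ :=
  ∑ p ∈ Finset.filter Nat.Prime (Finset.range (n + 1)), Real.log p

/-!
Both sides of `F x₁ 1 = ε = F x_K K` are squeezed by `u / (1 + u) ≤ log (1 + u) ≤ u`:
on the left `ε ≥ 1 / ((x + 1) log x)`, and on the right, since `x_K ≥ 2` and the geometric sum
is at least its last term `x_K ^ K ≥ 2 ^ K`, `ε ≤ 1 / (2 ^ K log 2)`. Hence
`2 ^ K log 2 ≤ (x + 1) log x ≤ x ^ 2 - 1 < 2 log 2 · x ^ 2`, i.e. `2 ^ (K - 1) < x ^ 2`.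
-/

theorem F_one (t : ℝ) : F t 1 = log (1 + 1 / t) / log t := by
  simp [F]

theorem one_div_add_one_mul_log_le_F_one {t : ℝ} (ht : 1 < t) :
    1 / ((t + 1) * log t) ≤ F t 1 := by
  have hlog : 0 < log t := log_pos ht
  have hinv : 1 - (1 + 1 / t)⁻¹ = 1 / (t + 1) := by
    field_simp
    ring
  rw [F_one, ← div_div, ← hinv]
  gcongr
  exact one_sub_inv_le_log_of_pos (by positivity)

theorem F_le_one_div_two_pow_mul_log_two {t : ℝ} (ht : 2 ≤ t) {k : ℕ} (hk : 1 ≤ k) :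
    F t k ≤ 1 / (2 ^ k * log 2) := by
  set S := ∑ i ∈ Finset.Icc 1 k, t ^ i
  have hS : (2 : ℝ) ^ k ≤ S :=
    (pow_le_pow_left₀ zero_le_two ht k).trans <|
      Finset.single_le_sum (f := (t ^ ·)) (fun i _ => by positivity)
        (Finset.mem_Icc.2 ⟨hk, le_rfl⟩)
  have hS0 : 0 < S := lt_of_lt_of_le (by positivity) hS
  have hlog : log (1 + 1 / S) ≤ 1 / S := by
    linarith [log_le_sub_one_of_pos (show 0 < 1 + 1 / S by positivity)]
  calc F t k = log (1 + 1 / S) / log t := rfl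
    _ ≤ (1 / S) / log 2 := by gcongr
    _ ≤ (1 / 2 ^ k) / log 2 := by gcongr
    _ = 1 / (2 ^ k * log 2) := div_div _ _ _

theorem add_one_mul_log_lt {x : ℝ} (hx : 0 < x) : (x + 1) * log x < 2 * log 2 * x ^ 2 := by
  have hlog2 : 1 / 2 < log 2 := by linarith [log_two_gt_d9]
  calc (x + 1) * log x ≤ (x + 1) * (x - 1) := by gcongr; exact log_le_sub_one_of_pos hx
    _ < 2 * log 2 * x ^ 2 := by nlinarith [sq_pos_of_pos hx]

theorem stmt6_general (ε : ℝ)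
    (x : ℝ) (hx : 1 < x) (hFx : F x 1 = ε)
    (K : ℕ) (hK : 1 ≤ K) (xK : ℝ) (hxK : 2 ≤ xK) (hFxK : F xK K = ε) :
    (K : ℝ) < 1 + (2 / Real.log 2) * Real.log x := by
  have hlog2 : 0 < log 2 := log_pos one_lt_two
  have hlogx : 0 < log x := log_pos hx
  have hpow_log : 2 ^ K * log 2 ≤ (x + 1) * log x :=
    (one_div_le_one_div (by positivity) (by positivity)).1 <|
      (one_div_add_one_mul_log_le_F_one hx).trans <|
        hFx ▸ hFxK ▸ F_le_one_div_two_pow_mul_log_two hxK hK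
  have hpow : (2 : ℝ) ^ K < 2 * x ^ 2 := by
    have := hpow_log.trans_lt (add_one_mul_log_lt (by linarith))
    nlinarith
  have hlog := log_lt_log (by positivity) hpow
  rw [log_pow, log_mul two_ne_zero (by positivity), log_pow] at hlog
  rw [← sub_lt_iff_lt_add', div_mul_eq_mul_div, lt_div_iff₀ hlog2]
  push_cast at hlog
  linarith

theorem stmt6 (ε : ℝ) (hε : 0 < ε) (hε' : ε < Real.log (3 / 2) / Real.log 2)
    (x : ℝ) (hx : 1 < x) (hFx : F x 1 = ε)
    (K : ℕ) (hK : 1 ≤ K) (xK : ℝ) (hxK : 2 ≤ xK) (hFxK : F xK K = ε) :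
    (K : ℝ) < 1 + (2 / Real.log 2) * Real.log x :=
  stmt6_general ε x hx hFx K hK xK hxK hFxK
end

section
/- For every integer k ≥ 3, the set of GA1 numbers N with Ω(N) = k is finite. More precisely, any GA1 number N with Ω(N) = k > 2 satisfies log N / log log N ≤ k. -/
open Real Filter

/-
The GA1 inequality at a prime factor p of N = p·m, together with σ(N) ≤ (p + 1) σ(m), gives
p · log log N ≤ (p + 1) · log log m. Since
log log N - log log m ≥ 1 - log m / log N = log p / log N,
this forces p log p ≤ log N · log log N, i.e. p ≤ log N. When Ω(N) ≥ 3 this holds for every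
prime factor, so N ≤ (log N)^Ω(N); taking logarithms gives the bound, and since (log N)^k = o(N)
only finitely many N qualify.
-/

open scoped ArithmeticFunction.Omega

theorem Nat.sum_divisors_mul_le {R : Type*} [CommSemiring R] [PartialOrder R] [IsOrderedRing R]
    (m n : ℕ) :
    ∑ d ∈ (m * n).divisors, (d : R) ≤
      (∑ d ∈ m.divisors, (d : R)) * ∑ d ∈ n.divisors, (d : R) := by
  rw [Nat.divisors_mul, Finset.mul_def, Finset.sum_mul_sum, ← Finset.sum_product']
  refine (Finset.sum_image_le_of_nonneg fun _ _ => Nat.cast_nonneg _).trans_eq ?_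
  simp only [Nat.cast_mul]

theorem Nat.Prime.sum_divisors_natCast {R : Type*} [AddCommMonoidWithOne R] {p : ℕ}
    (hp : p.Prime) : ∑ d ∈ p.divisors, (d : R) = p + 1 := by
  rw [hp.divisors, Finset.sum_pair hp.one_lt.ne, Nat.cast_one, add_comm]

theorem Nat.le_pow_cardFactors_of_forall_prime_le {n b : ℕ} (hn : n ≠ 0)
    (hb : ∀ p, p.Prime → p ∣ n → p ≤ b) : n ≤ b ^ Ω n := by
  conv_lhs => rw [← Nat.prod_primeFactorsList hn]
  rw [ArithmeticFunction.cardFactors_apply]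
  exact List.prod_le_pow_card _ _ fun p hp =>
    hb p (Nat.prime_of_mem_primeFactorsList hp) (Nat.dvd_of_mem_primeFactorsList hp)

theorem Real.one_lt_log_natCast {n : ℕ} (hn : 3 ≤ n) : 1 < log n := by
  rw [Real.lt_log_iff_exp_lt (by positivity)]
  have : (3 : ℝ) ≤ n := by exact_mod_cast hn
  linarith [Real.exp_one_lt_d9]

theorem Real.le_of_mul_log_le_mul_log {x y : ℝ} (hx : 1 < x) (hy : 0 < y)
    (h : x * log x ≤ y * log y) : x ≤ y := by
  by_contra! hyx
  have hlog : log y < log x := Real.log_lt_log hy hyx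
  have hlogx : 0 < log x := Real.log_pos hx
  nlinarith

theorem IsGA1.mul_log_log_le {p m : ℕ} (hN : IsGA1 (p * m)) (hp : p.Prime) (hm : 3 ≤ m) :
    p * log (log (p * m : ℕ)) ≤ (p + 1) * log (log m) := by
  have hmR : (0 : ℝ) < m := by positivity
  have hNR : (0 : ℝ) < (p * m : ℕ) := Nat.cast_pos.mpr (Nat.mul_pos hp.pos (by omega))
  have hLLm : 0 < log (log m) := Real.log_pos (Real.one_lt_log_natCast hm)
  have hLLN : 0 < log (log (p * m : ℕ)) :=
    Real.log_pos (Real.one_lt_log_natCast (hm.trans (Nat.le_mul_of_pos_left m hp.pos)))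
  have hσm : 0 < ∑ d ∈ m.divisors, (d : ℝ) :=
    Finset.sum_pos (fun d hd => by exact_mod_cast Nat.pos_of_mem_divisors hd)
      ⟨m, Nat.mem_divisors_self m (by omega)⟩
  have hσN :
      ∑ d ∈ (p * m).divisors, (d : ℝ) ≤ (p + 1) * ∑ d ∈ m.divisors, (d : ℝ) := by
    rw [← hp.sum_divisors_natCast]
    exact Nat.sum_divisors_mul_le p m
  have hG := hN.2.2 p hp (dvd_mul_right p m)
  rw [Nat.mul_div_cancel_left m hp.pos, G, G,
    div_le_div_iff₀ (mul_pos hmR hLLm) (mul_pos hNR hLLN), Nat.cast_mul] at hG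
  refine le_of_mul_le_mul_left ?_ (mul_pos hσm hmR)
  calc (∑ d ∈ m.divisors, (d : ℝ)) * m * (p * log (log (p * m : ℕ)))
      = (∑ d ∈ m.divisors, (d : ℝ)) * (p * m * log (log (p * m : ℕ))) := by ring
    _ ≤ (∑ d ∈ (p * m).divisors, (d : ℝ)) * (m * log (log m)) := by
        simpa only [Nat.cast_mul] using hG
    _ ≤ (p + 1) * (∑ d ∈ m.divisors, (d : ℝ)) * (m * log (log m)) := by gcongr
    _ = _ := by ring

theorem IsGA1.prime_le_log {p m : ℕ} (hN : IsGA1 (p * m)) (hp : p.Prime) (hm : 3 ≤ m) :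
    (p : ℝ) ≤ log (p * m : ℕ) := by
  have hp1 : (1 : ℝ) < p := by exact_mod_cast hp.one_lt
  have hu : 1 < log m := Real.one_lt_log_natCast hm
  have hx : log (p * m : ℕ) = log p + log m := by
    rw [Nat.cast_mul, Real.log_mul (by positivity) (by positivity)]
  set x := log (p * m : ℕ)
  have hlogp : 0 < log p := Real.log_pos hp1
  have hx0 : 0 < x := by linarith
  have hgap : log p / x ≤ log x - log (log m) := by
    rw [← Real.log_div hx0.ne' (by linarith)]
    refine le_trans (le_of_eq ?_) (Real.one_sub_inv_le_log_of_pos (by positivity))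
    field_simp
    linarith
  have hLL : log (log m) ≤ log x := Real.log_le_log (by linarith) (by linarith)
  have hcross := hN.mul_log_log_le hp hm
  refine Real.le_of_mul_log_le_mul_log hp1 hx0 ?_
  have : p * (log p / x) ≤ log x := calc
    p * (log p / x) ≤ p * (log x - log (log m)) := by gcongr
    _ ≤ log (log m) := by linarith
    _ ≤ log x := hLL
  rwa [mul_div_assoc', div_le_iff₀ hx0, mul_comm (log x)] at this

theorem IsGA1.natCast_le_log_pow {N : ℕ} (hN : IsGA1 N) (hΩ : 3 ≤ Ω N) :
    (N : ℝ) ≤ log N ^ Ω N := by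
  have hN0 : N ≠ 0 := Nat.ne_zero_of_lt hN.1
  have hlogN : 0 ≤ log (N : ℝ) := Real.log_natCast_nonneg N
  have hprime_le : ∀ p, p.Prime → p ∣ N → p ≤ ⌊log (N : ℝ)⌋₊ := by
    rintro p hp ⟨m, rfl⟩
    have hm0 : m ≠ 0 := right_ne_zero_of_mul hN0
    have hΩm : 2 ≤ Ω m := by
      rw [ArithmeticFunction.cardFactors_mul hp.ne_zero hm0,
        ArithmeticFunction.cardFactors_apply_prime hp] at hΩ
      omega
    have hm3 : 3 ≤ m := by
      by_contra! h
      interval_cases m <;> simp_all [ArithmeticFunction.cardFactors_apply_prime Nat.prime_two]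
    exact Nat.le_floor (hN.prime_le_log hp hm3)
  calc (N : ℝ) ≤ ((⌊log (N : ℝ)⌋₊ ^ Ω N : ℕ) : ℝ) :=
        by exact_mod_cast Nat.le_pow_cardFactors_of_forall_prime_le hN0 hprime_le
    _ ≤ log N ^ Ω N := by
        push_cast
        gcongr
        exact Nat.floor_le hlogN

theorem Real.eventually_log_pow_lt_natCast (k : ℕ) : ∀ᶠ n : ℕ in atTop, log n ^ k < n := by
  refine (tendsto_natCast_atTop_atTop (R := ℝ)).eventually (p := fun x => log x ^ k < x) ?_
  filter_upwards [(Real.isLittleO_pow_log_id_atTop (n := k)).def one_half_pos,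
    eventually_gt_atTop 0] with x hx hx0
  rw [Real.norm_eq_abs, Real.norm_eq_abs, id, abs_of_pos hx0] at hx
  linarith [le_abs_self (log x ^ k)]

theorem stmt12 (k : ℕ) (hk : 3 ≤ k) :
    {N : ℕ | IsGA1 N ∧ (ArithmeticFunction.cardFactors N) = k}.Finite ∧
    ∀ N : ℕ, IsGA1 N → (ArithmeticFunction.cardFactors N) = k →
      Real.log N / Real.log (Real.log N) ≤ (k : ℝ) := by
  have hbound : ∀ N, IsGA1 N → Ω N = k → (N : ℝ) ≤ log N ^ k := by
    rintro N hN rfl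
    exact hN.natCast_le_log_pow hk
  refine ⟨?_, fun N hN hΩ => ?_⟩
  · obtain ⟨M, hM⟩ := eventually_atTop.mp (Real.eventually_log_pow_lt_natCast k)
    refine (Set.finite_lt_nat M).subset fun N ⟨hN, hΩ⟩ => ?_
    by_contra! hMN
    exact (hbound N hN hΩ).not_gt (hM N (not_lt.mp hMN))
  · have hN3 : 3 ≤ N := by
      obtain ⟨h1, hnp, -⟩ := hN
      by_contra! h
      interval_cases N; norm_num at hnp
    have hLLN : 0 < log (log N) := Real.log_pos (Real.one_lt_log_natCast hN3)
    rw [div_le_iff₀ hLLN, ← Real.log_pow]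
    exact Real.log_le_log (by positivity) (hbound N hN hΩ)
end
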